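/- If an n-agent network is k-redundant, then for any subset S ⊆ {1,…,n} with |S| ≥ n−k, argmin_x Σ_{i∈S} ‖A_i x − b_i‖² equals X* := argmin_x Σ_{i=1}^n ‖A_i x − b_i‖². -/

import Mathlib

open Matrix Finset

/-- The set of least squares solutions over the subset `S` of agents:
minimizers of `x ↦ ∑ i ∈ S, ‖A_i x − b_i‖²`. -/
def lsSet {n d : ℕ} {r : Fin n → ℕ} (A : ∀ i, Matrix (Fin (r i)) (Fin d) ℝ)
    (b : ∀ i, Fin (r i) → ℝ) (S : Finset (Fin n)) : Set (Fin d → ℝ) :=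
  {x | ∀ y : Fin d → ℝ,
      ∑ i ∈ S, ∑ j, ((A i *ᵥ x - b i) j) ^ 2 ≤ ∑ i ∈ S, ∑ j, ((A i *ᵥ y - b i) j) ^ 2}

/-- An `n`-agent network with data `(A_i, b_i)` is `k`-redundant if for any two subsets
`S₁, S₂` of agents with `|S₁| = |S₂| = n − k`, the least squares solution sets over
`S₁` and `S₂` coincide. -/
def kRedundant {n d : ℕ} {r : Fin n → ℕ} (A : ∀ i, Matrix (Fin (r i)) (Fin d) ℝ)
    (b : ∀ i, Fin (r i) → ℝ) (k : ℕ) : Prop :=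
  ∀ S₁ S₂ : Finset (Fin n), S₁.card = n - k → S₂.card = n - k →
    lsSet A b S₁ = lsSet A b S₂

/-!
Write `f_S = ∑_{i ∈ S} f_i` for the least squares objective over `S`. Double counting gives
`(|S| - 1) f_S = ∑_{i ∈ S} f_{S ∖ {i}}`, so if all `f_{S ∖ {i}}` share a nonempty set `X` of
minimizers, then `x` minimizes `f_S` iff it minimizes every `f_{S ∖ {i}}`, i.e. iff `x ∈ X`.
By `k`-redundancy the sets of size `n - k ≥ 1` share their minimizers, and induction on `|S|`
carries this common set to every `S` with `|S| ≥ n - k`, in particular to `S = univ`.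
Nonemptiness holds because every least squares problem has a solution.
-/

theorem Finset.sum_sum_erase {ι M : Type*} [DecidableEq ι] [AddCommMonoid M]
    (s : Finset ι) (f : ι → M) :
    ∑ i ∈ s, ∑ j ∈ s.erase i, f j = (#s - 1) • ∑ j ∈ s, f j := by
  rw [sum_comm' (t' := s) (s' := s.erase) fun i j => by simp only [mem_erase]; grind,
    smul_sum]
  exact sum_congr rfl fun j hj => by rw [sum_const, card_erase_of_mem hj]

section Minimizers

variable {α β : Type*} [AddCommMonoid β] [LinearOrder β] [IsOrderedCancelAddMonoid β]

def minimizers (g : α → β) : Set α := {x | ∀ y, g x ≤ g y}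

theorem minimizers_nsmul {g : α → β} {n : ℕ} (hn : n ≠ 0) :
    minimizers (n • g) = minimizers g := by
  ext x
  simp only [minimizers, Set.mem_ofPred_eq, Pi.smul_apply, nsmul_le_nsmul_iff_right hn]

theorem minimizers_sum_eq {κ : Type*} {s : Finset κ} {g : κ → α → β} {X : Set α}
    (hs : s.Nonempty) (hX : X.Nonempty) (hg : ∀ k ∈ s, minimizers (g k) = X) :
    minimizers (∑ k ∈ s, g k) = X := by
  obtain ⟨x₀, hx₀⟩ := hX
  have hmin : ∀ x ∈ X, ∀ k ∈ s, ∀ y, g k x ≤ g k y := fun x hx k hk => by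
    rwa [← hg k hk] at hx
  have hsub : X ⊆ minimizers (∑ k ∈ s, g k) := fun x hx y => by
    simp only [Finset.sum_apply]
    exact sum_le_sum fun k hk => hmin x hx k hk y
  refine Set.Subset.antisymm (fun x hx => ?_) hsub
  have hsum : ∑ k ∈ s, g k x₀ = ∑ k ∈ s, g k x := by
    simpa only [Finset.sum_apply] using le_antisymm (hsub hx₀ x) (hx x₀)
  have hterm := (sum_eq_sum_iff_of_le fun k hk => hmin x₀ hx₀ k hk x).1 hsum
  obtain ⟨k, hk⟩ := hs
  rw [← hg k hk]
  intro y
  rw [← hterm k hk]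
  exact hmin x₀ hx₀ k hk y

variable {ι : Type*} [DecidableEq ι] {f : ι → α → β} {X : Set α}

theorem minimizers_sum_eq_of_forall_erase {S : Finset ι} (hS : S.Nontrivial) (hX : X.Nonempty)
    (h : ∀ i ∈ S, minimizers (∑ j ∈ S.erase i, f j) = X) :
    minimizers (∑ j ∈ S, f j) = X := by
  have hcard : #S - 1 ≠ 0 := by have := one_lt_card_iff_nontrivial.2 hS; omega
  rw [← minimizers_nsmul hcard, ← sum_sum_erase]
  exact minimizers_sum_eq hS.nonempty hX h

theorem minimizers_sum_eq_of_card_le {m : ℕ} (hm : 0 < m) (hX : X.Nonempty)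
    (h : ∀ T : Finset ι, #T = m → minimizers (∑ i ∈ T, f i) = X)
    {S : Finset ι} (hS : m ≤ #S) : minimizers (∑ i ∈ S, f i) = X := by
  obtain ⟨p, hp⟩ := Nat.exists_eq_add_of_le hS
  induction p generalizing S with
  | zero => exact h S hp
  | succ p ih =>
    refine minimizers_sum_eq_of_forall_erase (one_lt_card_iff_nontrivial.1 (by omega)) hX
      fun i hi => ?_
    exact ih (by rw [card_erase_of_mem hi]; omega) (by rw [card_erase_of_mem hi]; omega)

end Minimizers

theorem exists_forall_norm_sub_le {V E : Type*} [AddCommGroup V] [Module ℝ V]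
    [NormedAddCommGroup E] [NormedSpace ℝ E] [FiniteDimensional ℝ E] (L : V →ₗ[ℝ] E) (c : E) :
    ∃ x, ∀ y, ‖L x - c‖ ≤ ‖L y - c‖ := by
  obtain ⟨_, ⟨x, rfl⟩, hx⟩ :=
    (LinearMap.range L).closed_of_finiteDimensional.exists_infDist_eq_dist ⟨0, zero_mem _⟩ c
  refine ⟨x, fun y => ?_⟩
  rw [← dist_eq_norm', ← dist_eq_norm', ← hx]
  exact Metric.infDist_le_dist_of_mem ⟨y, rfl⟩

theorem Matrix.exists_forall_sum_sq_mulVec_sub_le {m n : Type*} [Fintype m] [Fintype n]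
    (A : Matrix m n ℝ) (b : m → ℝ) :
    ∃ x, ∀ y, ∑ i, ((A *ᵥ x - b) i) ^ 2 ≤ ∑ i, ((A *ᵥ y - b) i) ^ 2 := by
  let L : (n → ℝ) →ₗ[ℝ] EuclideanSpace ℝ m :=
    (WithLp.linearEquiv 2 ℝ (m → ℝ)).symm.toLinearMap ∘ₗ A.mulVecLin
  have hnorm : ∀ x, ‖L x - WithLp.toLp 2 b‖ ^ 2 = ∑ i, ((A *ᵥ x - b) i) ^ 2 := fun x => by
    rw [EuclideanSpace.real_norm_sq_eq]
    rfl
  obtain ⟨x, hx⟩ := exists_forall_norm_sub_le L (WithLp.toLp 2 b)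
  exact ⟨x, fun y => by rw [← hnorm, ← hnorm]; gcongr; exact hx y⟩

section LeastSquares

variable {n d : ℕ} {r : Fin n → ℕ} (A : ∀ i, Matrix (Fin (r i)) (Fin d) ℝ) (b : ∀ i, Fin (r i) → ℝ)

theorem lsSet_eq_minimizers (S : Finset (Fin n)) :
    lsSet A b S = minimizers (∑ i ∈ S, fun x => ∑ j, ((A i *ᵥ x - b i) j) ^ 2) := by
  ext x
  simp only [lsSet, minimizers, Finset.sum_apply, Set.mem_ofPred_eq]

theorem lsSet_nonempty (S : Finset (Fin n)) : (lsSet A b S).Nonempty := by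
  obtain ⟨x, hx⟩ := Matrix.exists_forall_sum_sq_mulVec_sub_le
    (Matrix.of fun (p : Σ i : S, Fin (r i)) => A p.1 p.2) (fun p => b p.1 p.2)
  refine ⟨x, fun y => ?_⟩
  have := hx y
  rw [Fintype.sum_sigma, Fintype.sum_sigma] at this
  rw [← sum_coe_sort S, ← sum_coe_sort S]
  exact this

end LeastSquares

/-- If an `n`-agent network is `k`-redundant, then for any subset `S`
with `|S| ≥ n − k`, the least squares solution set over `S` equals the global least
squares solution set `X* = argmin_x ∑_{i=1}^n ‖A_i x − b_i‖²`. -/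
theorem lsSet_eq_global {n d : ℕ} {r : Fin n → ℕ}
    (A : ∀ i, Matrix (Fin (r i)) (Fin d) ℝ) (b : ∀ i, Fin (r i) → ℝ)
    (k : ℕ) (hk : k ≤ n - 1) (hred : kRedundant A b k)
    (S : Finset (Fin n)) (hS : n - k ≤ S.card) :
    lsSet A b S = lsSet A b Finset.univ := by
  obtain rfl | hn := n.eq_zero_or_pos
  · exact congrArg _ (Subsingleton.elim _ _)
  obtain ⟨T, -, hT⟩ := exists_subset_card_eq (s := (univ : Finset (Fin n))) (n := n - k) (by simp)
  have hX : ∀ S' : Finset (Fin n), n - k ≤ #S' → lsSet A b S' = lsSet A b T := fun S' hS' => by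
    rw [lsSet_eq_minimizers]
    exact minimizers_sum_eq_of_card_le (by omega) (lsSet_nonempty A b T)
      (fun T' hT' => by rw [← lsSet_eq_minimizers]; exact hred T' T hT' hT) hS'
  rw [hX S hS, hX univ (by simp)]
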